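/- arXiv:1608.08764 — 3 statements merged into one kernel-verified Lean document; each statement's English description precedes it below -/
import Mathlib

section
/- For every positive integer N and every finitely supported sequence of non-negative integers (r_i) with N = ∑ r_i F_i (where F_1 = 1, F_2 = 2, F_{n+1} = F_n + F_{n-1}), the number of summands ∑ r_i is at least the number of summands in the Zeckendorf decomposition of N. -/
/-!
Every multiset of Fibonacci indices can be brought into Zeckendorf form by the moves
`F i + F (i + 1) → F (i + 2)`, `F 0 → F 1`, `F 0 + F 0 → F 2`, `F 1 + F 1 → F 2`,
`F 2 + F 2 → F 3 + F 1` and `F i + F i → F (i + 1) + F (i - 2)` for `i ≥ 3`. None of them changes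
the value or increases the number of summands, and each lowers a potential, so the process stops,
and it can only stop at a Zeckendorf set. By uniqueness of the Zeckendorf representation, that set
has as many elements as the Zeckendorf decomposition of `N`.
-/

/-- Fibonacci numbers indexed so that `F 1 = 1`, `F 2 = 2`,
`F (n+1) = F n + F (n-1)`. -/
def F (n : ℕ) : ℕ := Nat.fib (n + 1)

lemma F_add_two (i : ℕ) : F (i + 2) = F i + F (i + 1) := Nat.fib_add_two

def IsZeckendorfSet (S : Finset ℕ) : Prop := (∀ i ∈ S, 1 ≤ i) ∧ ∀ i ∈ S, i + 1 ∉ S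

namespace IsZeckendorfSet

variable {S : Finset ℕ}

/-- Mathlib's Zeckendorf representations are decreasing lists of `Nat.fib` indices. -/
lemma isZeckendorfRep (hS : IsZeckendorfSet S) :
    ((S.sort (· ≥ ·)).map (· + 1)).IsZeckendorfRep := by
  refine List.Pairwise.isChain (List.pairwise_append.2 ⟨?_, by simp, ?_⟩)
  · refine List.pairwise_map.2 ((Finset.sortedGT_sort S).pairwise.imp_of_mem ?_)
    intro a b ha hb hab
    have hb' : b + 1 ∉ S := hS.2 b ((Finset.mem_sort _).1 hb)
    have : a ≠ b + 1 := by rintro rfl; exact hb' ((Finset.mem_sort _).1 ha)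
    omega
  · simpa using hS.1

lemma card_eq_length_zeckendorf (hS : IsZeckendorfSet S) :
    S.card = (Nat.zeckendorf (∑ i ∈ S, F i)).length := by
  have hsum : ∑ i ∈ S, F i = (((S.sort (· ≥ ·)).map (· + 1)).map Nat.fib).sum := by
    rw [List.map_map, ← Multiset.sum_coe, ← Multiset.map_coe, Finset.sort_eq]
    rfl
  rw [hsum, Nat.zeckendorf_sum_fib hS.isZeckendorfRep, List.length_map, Finset.length_sort]

end IsZeckendorfSet

/-- Merging two summands into one loses at least `3`; splitting `F i + F i` into
`F (i + 1) + F (i - 2)` lowers the index sum, and the values at `0` and `1` are chosen so that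
`F 0 → F 1` and `F 2 + F 2 → F 3 + F 1` lower the potential too. -/
def potential : ℕ → ℕ
  | 0 => 4
  | 1 => 3
  | i + 2 => i + 5

lemma potential_add_four_add_potential_add_one_lt (i : ℕ) :
    potential (i + 4) + potential (i + 1) < potential (i + 3) + potential (i + 3) :=
  match i with
  | 0 => by decide
  | i + 1 => by simp only [potential]; omega

lemma potential_add_two_lt (i : ℕ) : potential (i + 2) < potential i + potential (i + 1) :=
  match i with
  | 0 | 1 => by decide
  | i + 2 => by simp only [potential]; omega

def ReducesTo (M M' : Multiset ℕ) : Prop :=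
  (M'.map F).sum = (M.map F).sum ∧ M'.card ≤ M.card ∧
    (M'.map potential).sum < (M.map potential).sum

lemma ReducesTo.add_tsub {M Q P : Multiset ℕ} (h : ReducesTo Q P) (hQ : Q ≤ M) :
    ReducesTo M (P + (M - Q)) := by
  obtain ⟨R, rfl⟩ := Multiset.le_iff_exists_add.1 hQ
  obtain ⟨hsum, hcard, hpot⟩ := h
  rw [add_tsub_cancel_left]
  refine ⟨?_, ?_, ?_⟩ <;>
    simp only [Multiset.map_add, Multiset.sum_add, Multiset.card_add] <;> omega

lemma exists_reducesTo_of_zero_mem {M : Multiset ℕ} (h : 0 ∈ M) : ∃ M', ReducesTo M M' :=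
  ⟨_, ReducesTo.add_tsub (Q := {0}) (P := {1}) (by unfold ReducesTo; decide)
    (Multiset.singleton_le.2 h)⟩

lemma exists_reducesTo_of_mem_of_succ_mem {M : Multiset ℕ} {i : ℕ} (hi : i ∈ M)
    (hi' : i + 1 ∈ M) : ∃ M', ReducesTo M M' := by
  have hQ : {i, i + 1} ≤ M := by
    rw [Multiset.le_iff_subset (by simp)]
    simp [Multiset.cons_subset, hi, hi']
  exact ⟨_, ReducesTo.add_tsub (P := {i + 2})
    ⟨by simp [F_add_two], by simp, by simpa using potential_add_two_lt i⟩ hQ⟩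

lemma exists_reducesTo_of_two_le_count {M : Multiset ℕ} {i : ℕ} (h : 2 ≤ M.count i) :
    ∃ M', ReducesTo M M' := by
  have hQ : Multiset.replicate 2 i ≤ M := Multiset.le_count_iff_replicate_le.1 h
  rcases i with _ | _ | _ | i
  · exact ⟨_, ReducesTo.add_tsub (P := {2}) (by unfold ReducesTo; decide) hQ⟩
  · exact ⟨_, ReducesTo.add_tsub (P := {2}) (by unfold ReducesTo; decide) hQ⟩
  · exact ⟨_, ReducesTo.add_tsub (P := {3, 1}) (by unfold ReducesTo; decide) hQ⟩
  · refine ⟨_, ReducesTo.add_tsub (P := {i + 4, i + 1}) ⟨?_, by simp, ?_⟩ hQ⟩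
    · simp [Multiset.replicate_succ, F_add_two]
      ring
    · simpa [Multiset.replicate_succ] using potential_add_four_add_potential_add_one_lt i

theorem exists_isZeckendorfSet_card_le (M : Multiset ℕ) :
    ∃ T : Finset ℕ, IsZeckendorfSet T ∧ ∑ i ∈ T, F i = (M.map F).sum ∧ T.card ≤ M.card := by
  by_cases hM : ∃ M', ReducesTo M M'
  · obtain ⟨M', hsum, hcard, hpot⟩ := hM
    obtain ⟨T, hT, hTsum, hTcard⟩ := exists_isZeckendorfSet_card_le M'
    exact ⟨T, hT, hTsum.trans hsum, hTcard.trans hcard⟩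
  have h0 : 0 ∉ M := fun h => hM (exists_reducesTo_of_zero_mem h)
  have hnd : M.Nodup := Multiset.nodup_iff_count_le_one.2 fun i =>
    not_lt.1 fun h => hM (exists_reducesTo_of_two_le_count h)
  refine ⟨⟨M, hnd⟩, ⟨fun i hi => ?_, fun i hi hi' => ?_⟩, rfl, le_rfl⟩
  · exact Nat.one_le_iff_ne_zero.2 (by rintro rfl; exact h0 hi)
  · exact hM (exists_reducesTo_of_mem_of_succ_mem hi hi')
termination_by (M.map potential).sum

lemma Finsupp.sum_map_toMultiset {α A : Type*} [AddCommMonoid A] (r : α →₀ ℕ) (f : α → A) :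
    ((Finsupp.toMultiset r).map f).sum = r.sum fun i v => v • f i := by
  induction r using Finsupp.induction_linear <;>
    simp_all [Finsupp.sum_add_index', add_smul, Multiset.map_nsmul, Multiset.sum_nsmul]

theorem zeckendorf_summand_minimal_general (N : ℕ)
    (S : Finset ℕ) (hS1 : ∀ i ∈ S, 1 ≤ i) (hS2 : ∀ i ∈ S, i + 1 ∉ S)
    (hSsum : ∑ i ∈ S, F i = N)
    (r : ℕ →₀ ℕ)
    (hr : (r.sum fun i v => v * F i) = N) :
    S.card ≤ r.sum fun _ v => v := by
  obtain ⟨T, hT, hTsum, hTcard⟩ := exists_isZeckendorfSet_card_le (Finsupp.toMultiset r)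
  simp only [Finsupp.sum_map_toMultiset, smul_eq_mul, hr, ← hSsum] at hTsum
  calc S.card = T.card := by
        rw [IsZeckendorfSet.card_eq_length_zeckendorf ⟨hS1, hS2⟩, ← hTsum,
          hT.card_eq_length_zeckendorf]
    _ ≤ r.sum fun _ v => v := hTcard.trans_eq (Finsupp.card_toMultiset r)

/-- Any representation of a positive integer `N` as a sum of
Fibonacci numbers (with non-negative integer multiplicities) uses at least as
many summands as the Zeckendorf decomposition of `N` (given by a set `S` of
indices `≥ 1`, no two consecutive, with `∑_{i ∈ S} F i = N`). -/
theorem zeckendorf_summand_minimal (N : ℕ) (hN : 0 < N)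
    (S : Finset ℕ) (hS1 : ∀ i ∈ S, 1 ≤ i) (hS2 : ∀ i ∈ S, i + 1 ∉ S)
    (hSsum : ∑ i ∈ S, F i = N)
    (r : ℕ →₀ ℕ) (hr1 : ∀ i ∈ r.support, 1 ≤ i)
    (hr : (r.sum fun i v => v * F i) = N) :
    S.card ≤ r.sum fun _ v => v :=
  zeckendorf_summand_minimal_general N S hS1 hS2 hSsum r hr
end

section
/- Let σ = (c_1, ..., c_t) be a signature of non-negative integers with c_1 ≥ c_2 ≥ ... ≥ c_t ≥ 1, and let H be the associated recurrence sequence with ideal initial conditions. Then for every non-negative integer m and every representation (r_i) of m (finite support, non-negative integers, ∑ r_i H_i = m), the number of summands ∑ r_i is at least the number of summands in the generalized Zeckendorf decomposition of m. -/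
def Hseq (t : ℕ) (c : ℕ → ℕ) : ℕ → ℕ
  | 0 => 1
  | (n+1) => ∑ i ∈ Finset.Icc 1 t,
      if _h : 1 ≤ i ∧ i ≤ n + 1 then c i * Hseq t c (n + 1 - i) else 0
  decreasing_by omega

/-- `[b_1, …, b_k]` is an allowable block for signature `(c 1, …, c t)`:
`k ≤ t`, `b_i = c i` for `i < k`, and `b_k < c k`. -/
def AllowableBlock (t : ℕ) (c : ℕ → ℕ) (b : List ℕ) : Prop :=
  ∃ k d, 1 ≤ k ∧ k ≤ t ∧ d < c k ∧
    b = ((List.range (k - 1)).map fun j => c (j + 1)) ++ [d]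

/-- A list of coefficients (most significant first) is composed of
allowable blocks. -/
def IsBlockString (t : ℕ) (c : ℕ → ℕ) (s : List ℕ) : Prop :=
  ∃ L : List (List ℕ), (∀ b ∈ L, AllowableBlock t c b) ∧ L.flatten = s

/-- The integer represented by a coefficient list `s = [r_m, …, r_0]`
(most significant first): `∑ r_i H_i`. -/
def listVal (t : ℕ) (c : ℕ → ℕ) (s : List ℕ) : ℕ :=
  ∑ k ∈ Finset.range s.length, s.getD k 0 * Hseq t c (s.length - 1 - k)

/-!
Coefficient strings are written most significant digit first, so that a suffix `v` carries the
positions below `|v|`. If a nonempty suffix `v` of a string does not start with an allowable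
block, then `v` either dominates the signature `c 1, …, c t, 0, …` entrywise, or first exceeds
it at a place other than its last one; in that case borrowing one unit there and spreading it
over the lower places by the recurrence makes `v` dominate the signature, because the
signature is weakly decreasing. Subtracting the signature from `v` and adding one to the digit
just above `v` is a carry: it keeps the value, does not increase the number of summands and
increases the string read as a base-`(m + 2)` numeral, so carries terminate, in a string all of
whose nonempty suffixes start with allowable blocks, that is, in a block string.

A block string of length `n` has value below `H n`, so two block strings of the same length
are compared by their leading blocks, lexicographically; hence the gzd is unique up to leading
zeros and has no more summands than any representation. For `t = 1`, `c 1 = 1` the sequence is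
constant and carries need not terminate, but then the only block strings are zero strings.
-/

namespace GenZeckendorf

open Finset

variable {t : ℕ} {c : ℕ → ℕ}

theorem sum_zipWith_add {u v : List ℕ} (h : u.length = v.length) :
    (List.zipWith (· + ·) u v).sum = u.sum + v.sum := by
  induction u generalizing v with
  | nil => simp [List.length_eq_zero_iff.1 h.symm]
  | cons a u ih =>
    obtain _ | ⟨b, v⟩ := v
    · simp at h
    · simp only [List.length_cons, Nat.add_right_cancel_iff] at h
      simp only [List.zipWith_cons_cons, List.sum_cons, ih h]
      ring

theorem forall₂_le_zipWith_add {x y : List ℕ} (hxy : List.Forall₂ (· ≤ ·) x y) :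
    ∀ {w : List ℕ}, y.length = w.length → List.Forall₂ (· ≤ ·) x (List.zipWith (· + ·) y w) := by
  induction hxy with
  | nil => intro w _; exact .nil
  | cons hab _ ih =>
    rintro (_ | ⟨e, w⟩) h
    · simp at h
    · exact .cons (hab.trans (Nat.le_add_right _ _)) (ih (by simpa using h))

theorem exists_eq_zipWith_add {σ v : List ℕ} (h : List.Forall₂ (· ≤ ·) σ v) :
    ∃ w, w.length = σ.length ∧ v = List.zipWith (· + ·) σ w := by
  induction h with
  | nil => exact ⟨[], rfl, rfl⟩
  | @cons a b _ _ hab _ ih =>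
    obtain ⟨w, hw, rfl⟩ := ih
    exact ⟨(b - a) :: w, by simp [hw], by simp [Nat.add_sub_cancel' hab]⟩

theorem forall₂_le_or_exists_first_diff :
    ∀ σ v : List ℕ, σ.length = v.length → List.Forall₂ (· ≤ ·) σ v ∨
      ∃ p d w, v = σ.take p ++ d :: w ∧ (d < σ.getD p 0 ∨ σ.getD p 0 < d ∧ w ≠ [])
  | [], [], _ => Or.inl .nil
  | s :: σ, b :: v, h => by
    rcases lt_trichotomy b s with hlt | rfl | hgt
    · exact Or.inr ⟨0, b, v, rfl, Or.inl hlt⟩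
    · rcases forall₂_le_or_exists_first_diff σ v (by simpa using h) with hle | ⟨p, d, w, rfl, hd⟩
      · exact Or.inl (.cons le_rfl hle)
      · exact Or.inr ⟨p + 1, d, w, rfl, hd⟩
    · rcases eq_or_ne v [] with rfl | hv
      · obtain rfl : σ = [] := by simpa using h
        exact Or.inl (.cons hgt.le .nil)
      · exact Or.inr ⟨0, b, v, rfl, Or.inr ⟨hgt, hv⟩⟩

theorem ofDigits_reverse_lt {K : ℕ} (hK : 1 < K) (w : List ℕ) (a : ℕ) {v v' : List ℕ}
    (hv : ∀ x ∈ v, x < K) (hlen : v'.length = v.length) :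
    Nat.ofDigits K (w ++ a :: v).reverse < Nat.ofDigits K (w ++ (a + 1) :: v').reverse := by
  have hlt := Nat.ofDigits_lt_base_pow_length hK (l := v.reverse) (by simpa using hv)
  simp only [List.reverse_append, List.reverse_cons, List.append_assoc, List.singleton_append,
    Nat.ofDigits_append, Nat.ofDigits_cons, List.length_reverse, hlen] at hlt ⊢
  nlinarith [Nat.zero_le (Nat.ofDigits K v'.reverse)]

/-- The signature `c 1, …, c t`, indexed from `0` and extended by zeros. -/
def sig (t : ℕ) (c : ℕ → ℕ) (k : ℕ) : ℕ := if k < t then c (k + 1) else 0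

theorem sig_of_lt {k : ℕ} (hk : k < t) : sig t c k = c (k + 1) := if_pos hk

theorem antitone_sig (hmono : ∀ i j, 1 ≤ i → i ≤ j → j ≤ t → c j ≤ c i) :
    Antitone (sig t c) := by
  intro a b hab
  unfold sig
  split_ifs with hb ha
  · exact hmono (a + 1) (b + 1) (by omega) (by omega) hb
  · omega
  all_goals exact Nat.zero_le _

def sigList (t : ℕ) (c : ℕ → ℕ) (n : ℕ) : List ℕ := (List.range n).map (sig t c)

@[simp] theorem length_sigList {n : ℕ} : (sigList t c n).length = n := by simp [sigList]

theorem sigList_succ (n : ℕ) :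
    sigList t c (n + 1) = sig t c 0 :: (List.range n).map (fun k => sig t c (k + 1)) := by
  simp [sigList, List.range_succ_eq_map]

theorem sigList_add (m n : ℕ) :
    sigList t c (m + n) = sigList t c m ++ (List.range n).map (fun k => sig t c (m + k)) := by
  simp [sigList, List.range_add, Function.comp_def]

theorem sigList_add_one (n : ℕ) : sigList t c (n + 1) = sigList t c n ++ [sig t c n] := by
  simp [sigList, List.range_succ]

theorem sigList_take {m n : ℕ} (h : m ≤ n) : (sigList t c n).take m = sigList t c m := by
  rw [sigList, ← List.map_take, List.take_range, min_eq_left h, sigList]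

theorem sum_sigList_mono {m n : ℕ} (h : m ≤ n) : (sigList t c m).sum ≤ (sigList t c n).sum := by
  rw [← sigList_take h]
  exact (List.take_sublist _ _).sum_le_sum fun _ _ => Nat.zero_le _

theorem sum_sigList_pos (h0 : 0 < sig t c 0) {n : ℕ} (hn : 0 < n) : 0 < (sigList t c n).sum := by
  obtain ⟨n, rfl⟩ := Nat.exists_eq_add_of_lt hn
  rw [zero_add, sigList_succ, List.sum_cons]
  exact Nat.lt_add_right _ h0

@[simp] theorem listVal_nil : listVal t c [] = 0 := rfl

theorem listVal_cons (a : ℕ) (v : List ℕ) :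
    listVal t c (a :: v) = a * Hseq t c v.length + listVal t c v := by
  unfold listVal
  rw [List.length_cons, Finset.sum_range_succ', add_comm]
  simp only [List.getD_cons_zero, List.getD_cons_succ, Nat.add_sub_cancel, Nat.sub_zero]
  congr 1
  refine Finset.sum_congr rfl fun k _ => ?_
  congr 2
  omega

@[simp] theorem listVal_replicate_zero (n : ℕ) : listVal t c (List.replicate n 0) = 0 := by
  induction n with
  | zero => rfl
  | succ n ih => rw [List.replicate_succ, listVal_cons, ih, zero_mul]

theorem listVal_append (x v : List ℕ) :
    listVal t c (x ++ v) = listVal t c (x ++ List.replicate v.length 0) + listVal t c v := by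
  induction x with
  | nil => simp
  | cons a x ih => simp only [List.cons_append, listVal_cons, ih, List.length_append,
      List.length_replicate, add_assoc]

theorem listVal_append_congr (x : List ℕ) {y y' : List ℕ} (hlen : y.length = y'.length)
    (hval : listVal t c y = listVal t c y') : listVal t c (x ++ y) = listVal t c (x ++ y') := by
  rw [listVal_append, hlen, hval, ← listVal_append]

theorem listVal_zipWith_add {u v : List ℕ} (h : u.length = v.length) :
    listVal t c (List.zipWith (· + ·) u v) = listVal t c u + listVal t c v := by
  induction u generalizing v with
  | nil => simp [List.length_eq_zero_iff.1 h.symm]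
  | cons a u ih =>
    obtain _ | ⟨b, v⟩ := v
    · simp at h
    · simp only [List.length_cons, Nat.add_right_cancel_iff] at h
      simp only [List.zipWith_cons_cons, listVal_cons, List.length_zipWith, h, min_self,
        ih h]
      ring

theorem listVal_append_cons_le (x : List ℕ) {a b : ℕ} {v v' : List ℕ} (hab : a ≤ b)
    (hlen : v.length = v'.length) (hv : listVal t c v ≤ listVal t c v') :
    listVal t c (x ++ a :: v) ≤ listVal t c (x ++ b :: v') := by
  rw [listVal_append, listVal_append x (b :: v'), List.length_cons, List.length_cons, hlen,
    listVal_cons, listVal_cons, hlen]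
  gcongr

theorem listVal_append_cons_lt (x : List ℕ) (d : ℕ) {v : List ℕ}
    (hv : listVal t c v < Hseq t c v.length) :
    listVal t c (x ++ d :: v) < listVal t c (x ++ (d + 1) :: List.replicate v.length 0) := by
  rw [listVal_append, listVal_append x ((d + 1) :: _)]
  simp only [List.length_cons, List.length_replicate, listVal_cons, listVal_replicate_zero]
  nlinarith

theorem Hseq_zero : Hseq t c 0 = 1 := by rw [Hseq]

/-- The defining recurrence of `H`, read as the value of a string. -/
theorem listVal_sigList {n : ℕ} (hn : 0 < n) : listVal t c (sigList t c n) = Hseq t c n := by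
  obtain ⟨n, rfl⟩ := Nat.exists_eq_add_of_lt hn
  rw [zero_add, Hseq, listVal, sigList, List.length_map, List.length_range,
    ← Finset.Ico_add_one_right_eq_Icc, ← Finset.sum_Ico_add' _ 0 t 1, ← Finset.range_eq_Ico]
  have hfilter : (range (n + 1)).filter (· < t) = (range t).filter (· < n + 1) := by
    ext k; simp only [mem_filter, mem_range]; omega
  calc _ = ∑ k ∈ range (n + 1), if k < t then c (k + 1) * Hseq t c (n - k) else 0 := by
        refine Finset.sum_congr rfl fun k hk => ?_
        rw [List.getD_eq_getElem _ _ (by simpa using hk)]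
        simp only [List.getElem_map, List.getElem_range, sig, Nat.add_sub_cancel]
        split_ifs <;> simp
    _ = ∑ k ∈ range t, if k < n + 1 then c (k + 1) * Hseq t c (n - k) else 0 := by
        rw [← Finset.sum_filter, ← Finset.sum_filter, hfilter]
    _ = _ := by
        refine Finset.sum_congr rfl fun k _ => ?_
        by_cases hk : k < n + 1
        · rw [if_pos hk, dif_pos (by omega), Nat.add_sub_add_right]
        · rw [if_neg hk, dif_neg (by omega)]

theorem sig_mul_Hseq_le (n : ℕ) : sig t c 0 * Hseq t c n ≤ Hseq t c (n + 1) := by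
  rw [← listVal_sigList n.succ_pos, sigList_succ, listVal_cons, List.length_map,
    List.length_range]
  exact Nat.le_add_right _ _

theorem sig_mul_Hseq_add_le (n : ℕ) :
    sig t c 0 * Hseq t c (n + 1) + sig t c 1 * Hseq t c n ≤ Hseq t c (n + 2) := by
  rw [← listVal_sigList (n + 1).succ_pos, sigList_succ, listVal_cons, List.range_succ_eq_map,
    List.map_cons, List.map_map, listVal_cons]
  simp only [List.length_map, List.length_range, List.length_cons, zero_add]
  omega

theorem Hseq_pos (h0 : 0 < sig t c 0) (n : ℕ) : 0 < Hseq t c n := by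
  induction n with
  | zero => rw [Hseq_zero]; exact one_pos
  | succ n ih => exact (Nat.mul_pos h0 ih).trans_le (sig_mul_Hseq_le n)

theorem self_le_Hseq (h0 : 0 < sig t c 0) (hgrow : 2 ≤ sig t c 0 ∨ 0 < sig t c 1) :
    ∀ n, n ≤ Hseq t c n
  | 0 => Nat.zero_le _
  | 1 => Hseq_pos h0 1
  | n + 2 => by
    have ih := self_le_Hseq h0 hgrow (n + 1)
    have hpos := Hseq_pos h0 n
    have key := sig_mul_Hseq_add_le (t := t) (c := c) n
    rcases hgrow with h | h <;> nlinarith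

theorem le_listVal_of_mem (h0 : 0 < sig t c 0) {u : List ℕ} {a : ℕ} (ha : a ∈ u) :
    a ≤ listVal t c u := by
  induction u with
  | nil => simp at ha
  | cons b u ih =>
    rw [listVal_cons]
    rcases List.mem_cons.1 ha with rfl | ha
    · exact (Nat.le_mul_of_pos_right _ (Hseq_pos h0 _)).trans (Nat.le_add_right _ _)
    · exact (ih ha).trans (Nat.le_add_left _ _)

theorem allowableBlock_iff {b : List ℕ} :
    AllowableBlock t c b ↔ ∃ p d, d < sig t c p ∧ b = sigList t c p ++ [d] := by
  constructor
  · rintro ⟨k, d, hk, hkt, hd, rfl⟩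
    refine ⟨k - 1, d, by rwa [sig, if_pos (by omega), Nat.sub_add_cancel hk], ?_⟩
    congr 1
    refine List.map_congr_left fun j hj => ?_
    rw [List.mem_range] at hj
    rw [sig, if_pos (by omega)]
  · rintro ⟨p, d, hd, rfl⟩
    have hp : p < t := by by_contra h; simp [sig, h] at hd
    refine ⟨p + 1, d, by omega, hp, by rwa [sig, if_pos hp] at hd, ?_⟩
    rw [Nat.add_sub_cancel, sigList]
    congr 1
    refine List.map_congr_left fun j hj => ?_
    rw [List.mem_range] at hj
    rw [sig, if_pos (by omega)]

theorem _root_.AllowableBlock.ne_nil {b : List ℕ} (hb : AllowableBlock t c b) : b ≠ [] := by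
  obtain ⟨_, _, _, _, _, rfl⟩ := hb
  simp

theorem replicate_zero_append_isBlockString (h0 : 0 < sig t c 0) {u : List ℕ}
    (hu : IsBlockString t c u) (k : ℕ) : IsBlockString t c (List.replicate k 0 ++ u) := by
  obtain ⟨L, hL, rfl⟩ := hu
  refine ⟨List.replicate k [0] ++ L, ?_, by simp⟩
  intro b hb
  rcases List.mem_append.1 hb with hb | hb
  · rw [List.eq_of_mem_replicate hb]
    exact allowableBlock_iff.2 ⟨0, 0, h0, rfl⟩
  · exact hL b hb

theorem sum_eq_zero_of_isBlockString (ht : t ≤ 1) (hc : c 1 ≤ 1) {s : List ℕ}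
    (hs : IsBlockString t c s) : s.sum = 0 := by
  obtain ⟨L, hL, rfl⟩ := hs
  rw [List.sum_flatten, List.sum_eq_zero]
  simp only [List.mem_map]
  rintro _ ⟨b, hb, rfl⟩
  obtain ⟨p, d, hd, rfl⟩ := allowableBlock_iff.1 (hL b hb)
  have hp : p < t := by by_contra h; simp [sig, h] at hd
  obtain rfl : p = 0 := by omega
  simp only [sig, if_pos hp, zero_add] at hd
  simp [sigList]
  omega

def StartsWithBlock (t : ℕ) (c : ℕ → ℕ) (v : List ℕ) : Prop :=
  ∃ b w, AllowableBlock t c b ∧ v = b ++ w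

theorem startsWithBlock_sigList_append {p d : ℕ} (hd : d < sig t c p) (w : List ℕ) :
    StartsWithBlock t c (sigList t c p ++ d :: w) :=
  ⟨_, w, allowableBlock_iff.2 ⟨p, d, hd, rfl⟩, by simp⟩

theorem isBlockString_of_forall_suffix {u : List ℕ}
    (h : ∀ v, v <:+ u → v ≠ [] → StartsWithBlock t c v) : IsBlockString t c u := by
  induction hn : u.length using Nat.strong_induction_on generalizing u with
  | _ n ih =>
    rcases eq_or_ne u [] with rfl | hu
    · exact ⟨[], by simp, rfl⟩
    obtain ⟨b, w, hb, rfl⟩ := h u (List.suffix_refl u) hu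
    have hlt : w.length < n := by
      rw [← hn, List.length_append]
      have := List.length_pos_iff.2 hb.ne_nil
      omega
    obtain ⟨L, hL, hLw⟩ := ih _ hlt (fun v hv => h v (hv.trans (List.suffix_append b w))) rfl
    refine ⟨b :: L, ?_, by rw [List.flatten_cons, hLw]⟩
    rintro b' (_ | ⟨_, hb'⟩)
    exacts [hb, hL b' hb']

theorem listVal_lt_of_toLex_lt {p₁ d₁ p₂ d₂ : ℕ} {v₁ v₂ : List ℕ} (hd₁ : d₁ < sig t c p₁)
    (hv₁ : listVal t c v₁ < Hseq t c v₁.length) (hlen : p₁ + v₁.length = p₂ + v₂.length)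
    (hlt : toLex (p₁, d₁) < toLex (p₂, d₂)) :
    listVal t c (sigList t c p₁ ++ d₁ :: v₁) < listVal t c (sigList t c p₂ ++ d₂ :: v₂) := by
  refine (listVal_append_cons_lt _ d₁ hv₁).trans_le ?_
  rcases Prod.Lex.toLex_lt_toLex.1 hlt with hp | ⟨rfl, hd⟩
  · obtain ⟨k, rfl⟩ := Nat.exists_eq_add_of_lt hp
    rw [add_assoc, sigList_add, List.range_succ_eq_map, List.map_cons, add_zero,
      List.append_assoc, List.cons_append]
    exact listVal_append_cons_le _ hd₁ (by simp; omega) (by simp)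
  · exact listVal_append_cons_le _ hd (by simp; omega) (by simp)

theorem listVal_sigList_append_lt {p d : ℕ} (hd : d < sig t c p) {v : List ℕ}
    (hv : listVal t c v < Hseq t c v.length) :
    listVal t c (sigList t c p ++ d :: v) < Hseq t c (sigList t c p ++ d :: v).length := by
  have hlex : toLex (p, d) < toLex (p + v.length, sig t c (p + v.length)) := by
    rcases Nat.eq_zero_or_pos v.length with hv | hv
    · exact Prod.Lex.toLex_lt_toLex.2 (Or.inr ⟨by simp [hv], by simpa [hv] using hd⟩)
    · exact Prod.Lex.toLex_lt_toLex.2 (Or.inl (by simpa using hv))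
  have hlt := listVal_lt_of_toLex_lt (v₂ := []) hd hv (by simp) hlex
  rw [← sigList_add_one, listVal_sigList (by simp)] at hlt
  simpa [add_assoc] using hlt

theorem listVal_lt_Hseq_of_isBlockString {u : List ℕ} (hu : IsBlockString t c u) :
    listVal t c u < Hseq t c u.length := by
  obtain ⟨L, hL, rfl⟩ := hu
  induction L with
  | nil => simp [Hseq_zero]
  | cons b L ih =>
    obtain ⟨p, d, hd, rfl⟩ := allowableBlock_iff.1 (hL b List.mem_cons_self)
    simpa using listVal_sigList_append_lt hd (ih fun b hb => hL b (List.mem_cons_of_mem _ hb))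

theorem eq_of_isBlockString {u₁ u₂ : List ℕ} (h₁ : IsBlockString t c u₁)
    (h₂ : IsBlockString t c u₂) (hlen : u₁.length = u₂.length)
    (hval : listVal t c u₁ = listVal t c u₂) : u₁ = u₂ := by
  obtain ⟨L₁, hL₁, rfl⟩ := h₁
  obtain ⟨L₂, hL₂, rfl⟩ := h₂
  induction L₁ generalizing L₂ with
  | nil => exact (List.length_eq_zero_iff.1 (by simpa using hlen.symm)).symm
  | cons b₁ L₁ ih =>
    obtain _ | ⟨b₂, L₂⟩ := L₂
    · simp [(hL₁ b₁ List.mem_cons_self).ne_nil] at hlen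
    obtain ⟨p₁, d₁, hd₁, rfl⟩ := allowableBlock_iff.1 (hL₁ _ List.mem_cons_self)
    obtain ⟨p₂, d₂, hd₂, rfl⟩ := allowableBlock_iff.1 (hL₂ _ List.mem_cons_self)
    have hT₁ : ∀ b ∈ L₁, AllowableBlock t c b := fun b hb => hL₁ b (List.mem_cons_of_mem _ hb)
    have hT₂ : ∀ b ∈ L₂, AllowableBlock t c b := fun b hb => hL₂ b (List.mem_cons_of_mem _ hb)
    have hv₁ := listVal_lt_Hseq_of_isBlockString ⟨L₁, hT₁, rfl⟩
    have hv₂ := listVal_lt_Hseq_of_isBlockString ⟨L₂, hT₂, rfl⟩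
    simp only [List.flatten_cons, List.append_assoc, List.singleton_append,
      List.length_append, List.length_cons, length_sigList] at hval hlen ⊢
    rcases lt_trichotomy (toLex (p₁, d₁)) (toLex (p₂, d₂)) with hlt | heq | hgt
    · exact absurd hval (listVal_lt_of_toLex_lt hd₁ hv₁ (by omega) hlt).ne
    · obtain ⟨rfl, rfl⟩ := Prod.ext_iff.1 (toLex.injective heq)
      have hlen' : L₁.flatten.length = L₂.flatten.length := by omega
      rw [ih hT₁ L₂ hT₂ hlen' ?_]
      rw [listVal_append, listVal_append _ (d₁ :: L₂.flatten)] at hval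
      simpa [listVal_cons, hlen'] using hval
    · exact absurd hval (listVal_lt_of_toLex_lt hd₂ hv₂ (by omega) hgt).ne'

theorem sum_eq_of_isBlockString (h0 : 0 < sig t c 0) {u₁ u₂ : List ℕ}
    (h₁ : IsBlockString t c u₁) (h₂ : IsBlockString t c u₂)
    (hval : listVal t c u₁ = listVal t c u₂) : u₁.sum = u₂.sum := by
  wlog hle : u₁.length ≤ u₂.length generalizing u₁ u₂
  · exact (this h₂ h₁ hval.symm (by omega)).symm
  have key := eq_of_isBlockString
    (replicate_zero_append_isBlockString h0 h₁ (u₂.length - u₁.length)) h₂ (by simp; omega) (by simpa [listVal_append] using hval)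
  simpa using congrArg List.sum key

/-- Borrowing one unit from the digit `a + 1` of `sigList p ++ (a + 1) :: w` and spreading it
over `w` by the recurrence yields a string that dominates the signature. -/
theorem forall₂_sigList_le_expand (hanti : Antitone (sig t c)) {p a : ℕ} (ha : sig t c p ≤ a)
    (w : List ℕ) :
    List.Forall₂ (· ≤ ·) (sigList t c (p + (w.length + 1)))
      (sigList t c p ++ a :: List.zipWith (· + ·) (sigList t c w.length) w) := by
  rw [sigList_add, List.range_succ_eq_map, List.map_cons, List.map_map, add_zero]
  refine List.rel_append (List.forall₂_refl _) (.cons ha (forall₂_le_zipWith_add ?_ length_sigList))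
  rw [sigList, List.forall₂_map_left_iff, List.forall₂_map_right_iff, List.forall₂_same]
  exact fun k _ => hanti (by simp; omega)

theorem exists_forall₂_sigList_le (h0 : 0 < sig t c 0) (hanti : Antitone (sig t c))
    {v : List ℕ} (hv : v ≠ []) (hbad : ¬ StartsWithBlock t c v) :
    ∃ v'', List.Forall₂ (· ≤ ·) (sigList t c v.length) v'' ∧
      listVal t c v'' = listVal t c v ∧ v''.sum + 1 ≤ v.sum + (sigList t c v.length).sum := by
  rcases forall₂_le_or_exists_first_diff _ v length_sigList with hdom | ⟨p, d, w, hvw, hd⟩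
  · exact ⟨v, hdom, rfl, by have := sum_sigList_pos h0 (List.length_pos_iff.2 hv); omega⟩
  have hlen : v.length = p + (w.length + 1) := by
    have := congrArg List.length hvw
    simp only [List.length_append, List.length_take, List.length_cons, length_sigList] at this
    omega
  rw [sigList_take (by omega)] at hvw
  rw [List.getD_eq_getElem _ _ (by rw [length_sigList]; omega)] at hd
  simp only [sigList, List.getElem_map, List.getElem_range] at hd
  rcases hd with hd | ⟨hd, hw⟩
  · exact absurd (hvw ▸ startsWithBlock_sigList_append hd w) hbad
  obtain ⟨e, rfl⟩ := Nat.exists_eq_add_of_lt hd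
  have hw : 0 < w.length := List.length_pos_iff.2 hw
  have hσw := sum_sigList_mono (t := t) (c := c) (show w.length ≤ v.length by omega)
  rw [hlen] at hσw ⊢
  rw [hvw]
  refine ⟨sigList t c p ++ (sig t c p + e) :: List.zipWith (· + ·) (sigList t c w.length) w,
    forall₂_sigList_le_expand hanti (Nat.le_add_right _ _) w, ?_, ?_⟩
  · refine listVal_append_congr _ (by simp) ?_
    rw [listVal_cons, listVal_cons, List.length_zipWith, length_sigList, min_self,
      listVal_zipWith_add length_sigList, listVal_sigList hw]
    ring
  · simp only [List.sum_append, List.sum_cons, sum_zipWith_add length_sigList]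
    omega

theorem exists_carry (h0 : 0 < sig t c 0) (hanti : Antitone (sig t c)) {v : List ℕ}
    (hv : v ≠ []) (hbad : ¬ StartsWithBlock t c v) :
    ∃ v', v'.length = v.length ∧ listVal t c v = Hseq t c v.length + listVal t c v' ∧
      v'.sum + 1 ≤ v.sum := by
  obtain ⟨v'', hdom, hval, hsum⟩ := exists_forall₂_sigList_le h0 hanti hv hbad
  obtain ⟨v', hlen, rfl⟩ := exists_eq_zipWith_add hdom
  refine ⟨v', hlen.trans length_sigList, ?_, ?_⟩
  · rw [← hval, listVal_zipWith_add hlen.symm, listVal_sigList (List.length_pos_iff.2 hv)]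
  · rw [sum_zipWith_add hlen.symm] at hsum
    omega

theorem exists_carry_step (h0 : 0 < sig t c 0) (hanti : Antitone (sig t c)) {u : List ℕ}
    (hu : listVal t c u < Hseq t c u.length)
    (hbad : ¬ ∀ v, v <:+ u → v ≠ [] → StartsWithBlock t c v) :
    ∃ w a v v', u = w ++ a :: v ∧ v'.length = v.length ∧
      listVal t c (w ++ (a + 1) :: v') = listVal t c u ∧ (w ++ (a + 1) :: v').sum ≤ u.sum := by
  push Not at hbad
  obtain ⟨v, ⟨x, rfl⟩, hv, hbad⟩ := hbad
  obtain ⟨v', hlen, hval, hsum⟩ := exists_carry h0 hanti hv hbad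
  obtain rfl | ⟨w, a, rfl⟩ := x.eq_nil_or_concat'
  · rw [List.nil_append, hval] at hu
    omega
  refine ⟨w, a, v, v', by simp, hlen, ?_, ?_⟩
  · rw [List.append_assoc, List.singleton_append]
    refine listVal_append_congr w (by simp [hlen]) ?_
    rw [listVal_cons, listVal_cons, hval, hlen]
    ring
  · simp only [List.sum_append, List.sum_cons]
    omega

theorem exists_isBlockString (h0 : 0 < sig t c 0) (hanti : Antitone (sig t c)) {u : List ℕ}
    (hu : listVal t c u < Hseq t c u.length) :
    ∃ u', u'.length = u.length ∧ listVal t c u' = listVal t c u ∧ u'.sum ≤ u.sum ∧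
      IsBlockString t c u' := by
  obtain ⟨m, hm⟩ : ∃ m, listVal t c u = m := ⟨_, rfl⟩
  -- Every digit is at most `m`, so `u` is a base-`(m + 2)` numeral below `(m + 2) ^ u.length`.
  have hK : 1 < m + 2 := by omega
  induction hn : (m + 2) ^ u.length - Nat.ofDigits (m + 2) u.reverse
    using Nat.strong_induction_on generalizing u with
  | _ n ih =>
    by_cases hgood : ∀ v, v <:+ u → v ≠ [] → StartsWithBlock t c v
    · exact ⟨u, rfl, rfl, le_rfl, isBlockString_of_forall_suffix hgood⟩
    obtain ⟨w, a, v, v', rfl, hlen, hval, hsum⟩ := exists_carry_step h0 hanti hu hgood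
    have hlen' : (w ++ (a + 1) :: v').length = (w ++ a :: v).length := by simp [hlen]
    have hdigit : ∀ {y}, listVal t c y = m → ∀ x ∈ y.reverse, x < m + 2 := fun hy x hx => by
      have := le_listVal_of_mem h0 (List.mem_reverse.1 hx)
      omega
    have hincr := ofDigits_reverse_lt hK w a
      (fun x hx => hdigit hm x (by simp [hx])) hlen
    have hbound := Nat.ofDigits_lt_base_pow_length hK (hdigit (hval.trans hm))
    rw [List.length_reverse, hlen'] at hbound
    obtain ⟨u', hlen'', hval', hsum', hblock⟩ :=
      ih _ (by rw [hlen']; omega) (by rwa [hval, hlen']) (hval.trans hm) rfl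
    exact ⟨u', hlen''.trans hlen', hval'.trans hval, hsum'.trans hsum, hblock⟩

theorem support_subset_range (h0 : 0 < sig t c 0) (hgrow : 2 ≤ sig t c 0 ∨ 0 < sig t c 1)
    (r : ℕ →₀ ℕ) : r.support ⊆ range ((r.sum fun i v => v * Hseq t c i) + 1) := by
  intro i hi
  rw [mem_range, Nat.lt_succ_iff]
  calc i ≤ Hseq t c i := self_le_Hseq h0 hgrow i
    _ ≤ r i * Hseq t c i :=
        Nat.le_mul_of_pos_left _ (Nat.pos_of_ne_zero (Finsupp.mem_support_iff.1 hi))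
    _ ≤ _ := Finset.single_le_sum (f := fun i => r i * Hseq t c i) (fun _ _ => Nat.zero_le _) hi

theorem listVal_map_reverse_range (f : ℕ →₀ ℕ) {n : ℕ} (hf : f.support ⊆ range n) :
    listVal t c ((List.range n).reverse.map f) = f.sum fun i v => v * Hseq t c i := by
  rw [Finsupp.sum_of_support_subset f hf (fun i v => v * Hseq t c i) (fun _ _ => zero_mul _),
    ← Finset.sum_range_reflect, listVal]
  simp only [List.length_map, List.length_reverse, List.length_range]
  refine Finset.sum_congr rfl fun k hk => ?_
  rw [mem_range] at hk
  rw [List.getD_eq_getElem _ _ (by simpa using hk)]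
  simp [List.getElem_reverse]

theorem sum_map_reverse_range (f : ℕ →₀ ℕ) {n : ℕ} (hf : f.support ⊆ range n) :
    ((List.range n).reverse.map f).sum = f.sum fun _ v => v := by
  rw [Finsupp.sum_of_support_subset f hf _ (fun _ _ => rfl), List.map_reverse, List.sum_reverse,
    ← List.sum_toFinset _ List.nodup_range, List.toFinset_range]

end GenZeckendorf

open GenZeckendorf

/-- If the signature `(c 1, …, c t)` is weakly decreasing with
`c t ≥ 1`, then for every `m` and every representation `r` of `m`, the number
of summands of `r` is at least that of the generalized Zeckendorf
decomposition of `m`. -/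
theorem weakly_decreasing_summand_minimal (t : ℕ) (ht : 1 ≤ t) (c : ℕ → ℕ)
    (hmono : ∀ i j, 1 ≤ i → i ≤ j → j ≤ t → c j ≤ c i) (hct : 1 ≤ c t)
    (m : ℕ) (r : ℕ →₀ ℕ) (hr : (r.sum fun i v => v * Hseq t c i) = m)
    (s : List ℕ) (hs : IsBlockString t c s) (hsval : listVal t c s = m) :
    s.sum ≤ r.sum fun _ v => v := by
  have h0 : 0 < sig t c 0 := by
    rw [sig_of_lt ht]
    exact hct.trans (hmono 1 t le_rfl ht le_rfl)
  by_cases hnd : 2 ≤ t ∨ 2 ≤ c 1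
  swap
  · rw [sum_eq_zero_of_isBlockString (by omega) (by omega) hs]
    exact Nat.zero_le _
  have hgrow : 2 ≤ sig t c 0 ∨ 0 < sig t c 1 := by
    rw [sig_of_lt ht]
    rcases hnd with h | h
    · exact Or.inr ((sig_of_lt h).symm ▸ hct.trans (hmono 2 t (by omega) h le_rfl))
    · exact Or.inl h
  have hsupp := hr ▸ support_subset_range h0 hgrow r
  have hu : listVal t c ((List.range (m + 1)).reverse.map r) = m :=
    (listVal_map_reverse_range r hsupp).trans hr
  obtain ⟨u', -, hval, hsum, hblock⟩ := exists_isBlockString h0 (antitone_sig hmono)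
    (u := (List.range (m + 1)).reverse.map r)
    (by rw [hu]; simpa using self_le_Hseq h0 hgrow (m + 1))
  calc s.sum = u'.sum := sum_eq_of_isBlockString h0 hs hblock (by rw [hsval, hval, hu])
    _ ≤ _ := hsum
    _ = _ := sum_map_reverse_range r hsupp
end

section
/- Let H = (H_n) satisfy the recurrence H_{n+t} + c_1 H_{n+t-1} + ... + c_t H_n = 0 with c_t ≠ 0, and define the Hankel matrix A_n = (H_{n+i+j})_{0 ≤ i, j ≤ t-1}. Then |det A_{n+1}| = |c_t| · |det A_n| for all n; in particular, if det A_{n_0} ≠ 0 for some n_0, then det A_n ≠ 0 for all n ≥ n_0. -/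
/-!
Shifting a solution of an order-`t` linear recurrence by one step is left multiplication by the
companion matrix `C` of the recurrence, so `A_{n+1} = C * A_n`, and expanding `det C` along its
first column gives `det C = ±c_t`.
-/

open Matrix Finset

namespace Hankel

variable {R : Type*} [CommRing R]

def hankel (H : ℕ → R) (t n : ℕ) : Matrix (Fin t) (Fin t) R :=
  Matrix.of fun i j => H (n + i + j)

def companion {s : ℕ} (a : Fin (s + 1) → R) : Matrix (Fin (s + 1)) (Fin (s + 1)) R :=
  Matrix.of <| Fin.lastCases a fun i => Pi.single i.succ 1

theorem det_companion {s : ℕ} (a : Fin (s + 1) → R) : (companion a).det = (-1) ^ s * a 0 := by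
  have hsub : (companion a).submatrix (Fin.last s).succAbove Fin.succ = 1 := by
    ext i j
    simp [companion, Matrix.one_apply, Pi.single_apply, eq_comm]
  rw [det_succ_column_zero, Fin.sum_univ_castSucc, hsub]
  simp [companion]

theorem companion_mul_hankel {s : ℕ} {a : Fin (s + 1) → R} {H : ℕ → R}
    (hH : (⟨s + 1, a⟩ : LinearRecurrence R).IsSolution H) (n : ℕ) :
    companion a * hankel H (s + 1) n = hankel H (s + 1) (n + 1) := by
  ext i j
  induction i using Fin.lastCases with
  | last =>
    simp only [companion, hankel, mul_apply, of_apply, Fin.lastCases_last, Fin.val_last]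
    rw [show n + 1 + s + j = n + j + (s + 1) by omega, hH]
    simp_rw [add_right_comm n (j : ℕ)]
  | cast i =>
    simp only [companion, hankel, mul_apply, of_apply, Fin.lastCases_castSucc, Pi.single_apply,
      ite_mul, one_mul, zero_mul, sum_ite_eq', mem_univ, ↓reduceIte, Fin.val_succ, Fin.val_castSucc]
    congr 1
    omega

theorem det_hankel_add {s : ℕ} {a : Fin (s + 1) → R} {H : ℕ → R}
    (hH : (⟨s + 1, a⟩ : LinearRecurrence R).IsSolution H) (n k : ℕ) :
    (hankel H (s + 1) (n + k)).det = ((-1) ^ s * a 0) ^ k * (hankel H (s + 1) n).det := by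
  induction k with
  | zero => simp
  | succ k ih =>
    rw [← add_assoc, ← companion_mul_hankel hH, det_mul, det_companion, ih, pow_succ']
    ring

theorem isSolution_of_add_sum_Icc_eq_zero {s : ℕ} {c H : ℕ → R}
    (hrec : ∀ n, H (n + (s + 1)) + ∑ i ∈ Icc 1 (s + 1), c i * H (n + (s + 1) - i) = 0) :
    (⟨s + 1, fun k => -c (s + 1 - k)⟩ : LinearRecurrence R).IsSolution H := by
  intro n
  change H (n + (s + 1)) = ∑ k : Fin (s + 1), -c (s + 1 - k) * H (n + k)
  rw [eq_neg_of_add_eq_zero_left (hrec n), ← sum_neg_distrib,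
    Fin.sum_univ_eq_sum_range (fun k => -c (s + 1 - k) * H (n + k))]
  refine sum_nbij' (fun k => s + 1 - k) (fun k => s + 1 - k) ?_ ?_ ?_ ?_ ?_ <;>
    intro k hk <;> simp only [mem_range, mem_Icc] at hk ⊢
  all_goals first | omega | rw [neg_mul]; congr 3 <;> omega

end Hankel

open Hankel in
/-- If `H` satisfies `H (n+t) + c_1 H (n+t-1) + ⋯ + c_t H n = 0`
with `c t ≠ 0`, and `A_n` is the `t × t` Hankel matrix with entries
`H (n+i+j)`, then `|det A_{n+1}| = |c t| * |det A_n|` for all `n`; in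
particular if `det A_{n₀} ≠ 0` then `det A_n ≠ 0` for all `n ≥ n₀`. -/
theorem hankel_det_ratio (t : ℕ) (ht : 1 ≤ t) (c : ℕ → ℚ) (hct : c t ≠ 0)
    (H : ℕ → ℚ)
    (hrec : ∀ n, H (n + t) + ∑ i ∈ Finset.Icc 1 t, c i * H (n + t - i) = 0) :
    (∀ n, |(Matrix.of fun i j : Fin t => H (n + 1 + (i : ℕ) + j)).det| =
        |c t| * |(Matrix.of fun i j : Fin t => H (n + (i : ℕ) + j)).det|)
    ∧ ∀ n₀, (Matrix.of fun i j : Fin t => H (n₀ + (i : ℕ) + j)).det ≠ 0 →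
        ∀ n, n₀ ≤ n → (Matrix.of fun i j : Fin t => H (n + (i : ℕ) + j)).det ≠ 0 := by
  obtain ⟨s, rfl⟩ : ∃ s, t = s + 1 := ⟨t - 1, by omega⟩
  have hH := isSolution_of_add_sum_Icc_eq_zero hrec
  refine ⟨fun n => ?_, fun n₀ h₀ n hn => ?_⟩
  · change |(hankel H (s + 1) (n + 1)).det| = _ * |(hankel H (s + 1) n).det|
    simp [det_hankel_add hH n 1, abs_mul]
  · obtain ⟨k, rfl⟩ := Nat.exists_eq_add_of_le hn
    change (hankel H (s + 1) (n₀ + k)).det ≠ 0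
    rw [det_hankel_add hH]
    exact mul_ne_zero (by simp [hct]) h₀
end
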